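/- arXiv:1207.6292 — 2 statements merged into one kernel-verified Lean document; each statement's English description precedes it below -/
import Mathlib

section
/- Let $P(x)$ be an even matrix polynomial, $B(z)$ and $C(z)$ the unique matrix polynomials such that $P(x) = B(x^2) + x\,C(x^2)$, where $B$ collects the symmetric (even-power) coefficients and $C$ the skew-symmetric (odd-power) coefficients. Define $M(z) = \begin{pmatrix} B(z) & z C(z) \\ C(z) & B(z) \end{pmatrix}$. Then $\det M(x^2) = \det P(x) \cdot \det P(-x)$ for all $x \in \mathbb{C}$. -/
open Matrix

/-! Conjugating `[[B, x²C], [C, B]]` by the block shear `[[1, x], [0, 1]]` makes it block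
lower triangular with diagonal blocks `B + xC` and `B - xC`; for `B = B(x²)`, `C = C(x²)`
these are `P(x)` and `P(-x)`. -/

namespace Matrix

variable {m n R : Type*} [Fintype m] [Fintype n] [DecidableEq m] [DecidableEq n] [CommRing R]

theorem det_fromBlocks_one_zero_one (X : Matrix m n R) :
    (fromBlocks 1 X 0 1).det = 1 := by
  simp

theorem fromBlocks_shear_conj (B C : Matrix n n R) (x : R) :
    fromBlocks 1 (x • 1) 0 1 * fromBlocks B (x ^ 2 • C) C B * fromBlocks 1 ((-x) • 1) 0 1
      = fromBlocks (B + x • C) 0 C (B - x • C) := by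
  simp only [fromBlocks_multiply, Matrix.one_mul, Matrix.mul_one, Matrix.zero_mul,
    Matrix.mul_zero, Matrix.smul_mul, Matrix.mul_smul, add_zero, zero_add]
  congr 1 <;> module

theorem det_fromBlocks_sq_smul (B C : Matrix n n R) (x : R) :
    (fromBlocks B (x ^ 2 • C) C B).det = (B + x • C).det * (B - x • C).det := by
  have h := congrArg det (fromBlocks_shear_conj B C x)
  rwa [det_mul, det_mul, det_fromBlocks_one_zero_one, det_fromBlocks_one_zero_one,
    one_mul, mul_one, det_fromBlocks_zero₁₂] at h

end Matrix

theorem even_polynomial_block_determinant_general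
    (n : ℕ) (P B C : ℂ → Matrix (Fin n) (Fin n) ℂ)
    (hsplit : ∀ x : ℂ, P x = B (x ^ 2) + x • C (x ^ 2)) :
    ∀ x : ℂ,
      (Matrix.fromBlocks (B (x ^ 2)) ((x ^ 2) • C (x ^ 2)) (C (x ^ 2)) (B (x ^ 2))).det
        = (P x).det * (P (-x)).det := by
  intro x
  have hP_neg : P (-x) = B (x ^ 2) - x • C (x ^ 2) := by
    rw [hsplit, neg_sq, neg_smul, sub_eq_add_neg]
  rw [hsplit x, hP_neg, det_fromBlocks_sq_smul]

/-- For an even matrix polynomial `P(x) = B(x²) + x C(x²)`, the doubled-size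
polynomial `M(z) = [[B(z), z C(z)], [C(z), B(z)]]` satisfies
`det M(x²) = det P(x) · det P(-x)`. -/
theorem even_polynomial_block_determinant
    (n : ℕ) (P B C : ℂ → Matrix (Fin n) (Fin n) ℂ)
    (hsplit : ∀ x : ℂ, P x = B (x ^ 2) + x • C (x ^ 2))
    (heven : ∀ x : ℂ, (P x)ᵀ = P (-x)) :
    ∀ x : ℂ,
      (Matrix.fromBlocks (B (x ^ 2)) ((x ^ 2) • C (x ^ 2)) (C (x ^ 2)) (B (x ^ 2))).det
        = (P x).det * (P (-x)).det :=
  even_polynomial_block_determinant_general n P B C hsplit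
end

section
/- Let $p(x)$ be a scalar polynomial of degree $N$ with roots $\xi_1, \ldots, \xi_N$ (with multiplicity) and leading coefficient $p_N$, and let $x_1, \ldots, x_N$ be pairwise distinct complex numbers. Then every root of $p$ lies in the union of the disks $D_i$ of center $x_i$ and radius $r_i = N\, |p(x_i)| / (|p_N| \prod_{j \neq i} |x_i - x_j|)$, $i = 1, \ldots, N$. -/
/-!
Divide out the root: `p = (X - z) q` with `q` of degree `N - 1` and leading coefficient `p_N`.
The Lagrange formula for the top coefficient of `q` at the `N` nodes `x_i` reads
`p_N = ∑ i, q(x_i) / ∏_{j ≠ i} (x_i - x_j)`, and `q(x_i) = p(x_i) / (x_i - z)`.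
If `z` lay outside every disk, each summand would have norm `< |p_N| / N`, so the sum could
not reach `|p_N|`.
-/

open Polynomial Finset

namespace Polynomial

variable {ι : Type*} [DecidableEq ι] {s : Finset ι}

theorem leadingCoeff_eq_sum_eval_divByMonic_X_sub_C {F : Type*} [Field F] {v : ι → F}
    (hvs : Set.InjOn v s) {p : F[X]} (hp : p ≠ 0) (hdeg : p.natDegree = #s) {z : F}
    (hz : p.IsRoot z) :
    p.leadingCoeff = ∑ i ∈ s, (p /ₘ (X - C z)).eval (v i) / ∏ j ∈ s.erase i, (v i - v j) := by
  have hpos : 0 < p.degree := degree_pos_of_root hp hz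
  have hlc : (p /ₘ (X - C z)).leadingCoeff = p.leadingCoeff :=
    leadingCoeff_divByMonic_X_sub_C p hpos.ne' z
  rw [← hlc]
  refine Lagrange.leadingCoeff_eq_sum hvs ?_
  have hq : p /ₘ (X - C z) ≠ 0 := by
    rw [← leadingCoeff_ne_zero, hlc, leadingCoeff_ne_zero]; exact hp
  rw [degree_eq_natDegree hq, natDegree_divByMonic _ (monic_X_sub_C z), natDegree_X_sub_C, hdeg]
  have : 0 < #s := hdeg ▸ natDegree_pos_iff_degree_pos.mpr hpos
  norm_cast
  omega

theorem exists_norm_sub_le_of_isRoot {K : Type*} [NormedField K] {v : ι → K}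
    (hvs : Set.InjOn v s) {p : K[X]} (hp : p ≠ 0) (hdeg : p.natDegree = #s) {z : K}
    (hz : p.IsRoot z) :
    ∃ i ∈ s, ‖z - v i‖ ≤
      #s * ‖p.eval (v i)‖ / (‖p.leadingCoeff‖ * ∏ j ∈ s.erase i, ‖v i - v j‖) := by
  set q := p /ₘ (X - C z)
  have hfactor : ∀ y, p.eval y = (y - z) * q.eval y := fun y => by
    conv_lhs => rw [← mul_divByMonic_eq_iff_isRoot.mpr hz]
    rw [eval_mul, eval_sub, eval_X, eval_C]
  have hlc : ‖p.leadingCoeff‖ ≤ ∑ i ∈ s, ‖q.eval (v i)‖ / ∏ j ∈ s.erase i, ‖v i - v j‖ := by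
    rw [leadingCoeff_eq_sum_eval_divByMonic_X_sub_C hvs hp hdeg hz]
    refine (norm_sum_le _ _).trans_eq (sum_congr rfl fun i _ => ?_)
    rw [norm_div, norm_prod]
  have hs : s.Nonempty := by
    rw [← card_pos, ← hdeg, natDegree_pos_iff_degree_pos]; exact degree_pos_of_root hp hz
  have hcard : (0 : ℝ) < #s := by exact_mod_cast hs.card_pos
  have hlc_pos : 0 < ‖p.leadingCoeff‖ := by simpa using hp
  by_contra! hfar
  have hterm : ∀ i ∈ s,
      ‖q.eval (v i)‖ / ∏ j ∈ s.erase i, ‖v i - v j‖ < ‖p.leadingCoeff‖ / #s := by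
    intro i hi
    have hprod : 0 < ∏ j ∈ s.erase i, ‖v i - v j‖ := prod_pos fun j hj => by
      rw [norm_pos_iff, sub_ne_zero]
      exact fun h => (ne_of_mem_erase hj) (hvs (mem_of_mem_erase hj) hi h.symm)
    have hi' := hfar i hi
    rw [hfactor, norm_mul, norm_sub_rev] at hi'
    have hdist : 0 < ‖z - v i‖ := lt_of_le_of_lt (by positivity) hi'
    rw [div_lt_iff₀ (by positivity)] at hi'
    rw [div_lt_div_iff₀ hprod hcard]
    nlinarith
  have := sum_lt_sum_of_nonempty hs hterm
  rw [sum_const, nsmul_eq_mul, mul_div_cancel₀ _ hcard.ne'] at this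
  linarith

end Polynomial

/-- Inclusion disks: every root of `p = p_N ∏ (X - ξ i)` lies in the union of
the disks centered at `x i` with radii
`r i = N |p(x i)| / (|p_N| ∏_{j ≠ i} |x i - x j|)`. -/
theorem inclusion_disks
    (N : ℕ) (pN : ℂ) (hpN : pN ≠ 0) (ξ x : Fin N → ℂ)
    (hx : Function.Injective x) (p : Polynomial ℂ)
    (hp : p = Polynomial.C pN * ∏ i, (X - Polynomial.C (ξ i)))
    (z : ℂ) (hz : p.eval z = 0) :
    ∃ i, ‖z - x i‖ ≤
      N * ‖p.eval (x i)‖ /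
        (‖pN‖ * ∏ j ∈ Finset.univ.erase i, ‖x i - x j‖) := by
  have hmonic : (∏ i, (X - C (ξ i))).Monic := monic_prod_of_monic _ _ fun i _ => monic_X_sub_C _
  have hp0 : p ≠ 0 := hp ▸ mul_ne_zero (C_ne_zero.mpr hpN) hmonic.ne_zero
  have hdeg : p.natDegree = #(univ : Finset (Fin N)) := by
    rw [hp, natDegree_C_mul hpN, natDegree_prod_of_monic _ _ fun i _ => monic_X_sub_C _]
    simp
  have hlc : p.leadingCoeff = pN := by
    rw [hp, leadingCoeff_C_mul_of_isUnit hpN.isUnit, hmonic.leadingCoeff, mul_one]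
  obtain ⟨i, -, hi⟩ := exists_norm_sub_le_of_isRoot hx.injOn hp0 hdeg hz
  exact ⟨i, by simpa [hlc] using hi⟩
end
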